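/- arXiv:2106.09103 — 6 statements merged into one kernel-verified Lean document; each statement's English description precedes it below -/
import Mathlib

section
/- Let A be a normed algebra possessing an approximate identity and let x ∈ A. Then the right principal ideal xA is dense in A if and only if x is approximately right invertible. -/
/-- An approximate identity in a non-unital normed algebra `A`. -/
def ApproxId {A : Type*} [NonUnitalNormedRing A] {ι : Type*} (F : Filter ι) (e : ι → A) : Prop :=
  ∀ x : A, Filter.Tendsto (fun j => e j * x) F (nhds x) ∧
    Filter.Tendsto (fun j => x * e j) F (nhds x)

/-- `x` is approximately right invertible. -/
def ApproxRightInv {A : Type*} [NonUnitalNormedRing A] (x : A) : Prop :=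
  ∃ (ι : Type) (F : Filter ι), F.NeBot ∧ ∃ r : ι → A, ApproxId F (fun j => x * r j)

/-- `x` is approximately left invertible. -/
def ApproxLeftInv {A : Type*} [NonUnitalNormedRing A] (x : A) : Prop :=
  ∃ (ι : Type) (F : Filter ι), F.NeBot ∧ ∃ l : ι → A, ApproxId F (fun j => l j * x)

theorem dense_principal_ideal_iff_approxRightInv {A : Type*} [NonUnitalNormedRing A]
    (hA : ∃ (ι : Type) (F : Filter ι), F.NeBot ∧ ∃ e : ι → A, ApproxId F e) (x : A) :
    Dense (Set.range fun a : A => x * a) ↔ ApproxRightInv x := by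
  constructor
  · intro hd
    obtain ⟨ι, F, hF, e, he⟩ := hA
    have hsel : ∀ (j : ι) (n : ℕ), ∃ a : A, ‖x * a - e j‖ < 1 / (n + 1) := by
      intro j n
      have hmem : e j ∈ closure (Set.range fun a : A => x * a) := hd _
      rw [Metric.mem_closure_iff] at hmem
      obtain ⟨b, hb, hdist⟩ := hmem (1 / (n + 1)) (by positivity)
      obtain ⟨a, rfl⟩ := hb
      exact ⟨a, by rwa [dist_comm, dist_eq_norm] at hdist⟩
    choose r hr using hsel
    refine ⟨ι × ℕ, F ×ˢ Filter.atTop, hF.prod Filter.atTop_neBot,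
      fun p => r p.1 p.2, ?_⟩
    intro y
    have hbound : Filter.Tendsto
        (fun p : ι × ℕ => ‖y‖ * (1 / (p.2 + 1))) (F ×ˢ Filter.atTop) (nhds 0) := by
      have h1 : Filter.Tendsto (fun n : ℕ => ‖y‖ * (1 / (n + 1 : ℝ)))
          Filter.atTop (nhds 0) := by
        have := tendsto_one_div_add_atTop_nhds_zero_nat (𝕜 := ℝ)
        simpa using (this.const_mul ‖y‖)
      exact h1.comp Filter.tendsto_snd
    constructor
    · rw [tendsto_iff_norm_sub_tendsto_zero]
      have hb2 : Filter.Tendsto (fun p : ι × ℕ => ‖e p.1 * y - y‖)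
          (F ×ˢ Filter.atTop) (nhds 0) := by
        have := (tendsto_iff_norm_sub_tendsto_zero.mp (he y).1).comp
          (Filter.tendsto_fst : Filter.Tendsto (Prod.fst : ι × ℕ → ι) (F ×ˢ Filter.atTop) F)
        exact this
      have := hbound.add hb2
      rw [add_zero] at this
      refine squeeze_zero (fun p => norm_nonneg _) (fun p => ?_) this
      calc ‖x * r p.1 p.2 * y - y‖
          = ‖(x * r p.1 p.2 - e p.1) * y + (e p.1 * y - y)‖ := by rw [sub_mul]; congr 1; abel
        _ ≤ ‖(x * r p.1 p.2 - e p.1) * y‖ + ‖e p.1 * y - y‖ := norm_add_le _ _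
        _ ≤ ‖x * r p.1 p.2 - e p.1‖ * ‖y‖ + ‖e p.1 * y - y‖ := by
            gcongr; exact norm_mul_le _ _
        _ ≤ ‖y‖ * (1 / (p.2 + 1)) + ‖e p.1 * y - y‖ := by
            rw [mul_comm ‖y‖]; gcongr; exact (hr p.1 p.2).le
    · rw [tendsto_iff_norm_sub_tendsto_zero]
      have hb2 : Filter.Tendsto (fun p : ι × ℕ => ‖y * e p.1 - y‖)
          (F ×ˢ Filter.atTop) (nhds 0) := by
        have := (tendsto_iff_norm_sub_tendsto_zero.mp (he y).2).comp
          (Filter.tendsto_fst : Filter.Tendsto (Prod.fst : ι × ℕ → ι) (F ×ˢ Filter.atTop) F)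
        exact this
      have := hbound.add hb2
      rw [add_zero] at this
      refine squeeze_zero (fun p => norm_nonneg _) (fun p => ?_) this
      calc ‖y * (x * r p.1 p.2) - y‖
          = ‖y * (x * r p.1 p.2 - e p.1) + (y * e p.1 - y)‖ := by rw [mul_sub]; congr 1; abel
        _ ≤ ‖y * (x * r p.1 p.2 - e p.1)‖ + ‖y * e p.1 - y‖ := norm_add_le _ _
        _ ≤ ‖y‖ * ‖x * r p.1 p.2 - e p.1‖ + ‖y * e p.1 - y‖ := by
            gcongr; exact norm_mul_le _ _
        _ ≤ ‖y‖ * (1 / (p.2 + 1)) + ‖y * e p.1 - y‖ := by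
            gcongr; exact (hr p.1 p.2).le
  · rintro ⟨ι, F, hF, r, hr⟩
    intro y
    have : Filter.Tendsto (fun j => x * (r j * y)) F (nhds y) := by
      simpa [mul_assoc] using (hr y).1
    exact mem_closure_of_tendsto this (Filter.Eventually.of_forall fun j =>
      Set.mem_range_self _)
end

section
/- Let A be a non-unital normed algebra and x ∈ A approximately right invertible. Then x ∉ A x, i.e., there is no y ∈ A with x = y x. -/
theorem approxRightInv_not_mem_Ax {A : Type*} [NonUnitalNormedRing A]
    (hnu : ¬ ∃ e : A, ∀ y : A, e * y = y ∧ y * e = y)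
    (x : A) (hx : ApproxRightInv x) :
    ¬ ∃ y : A, x = y * x := by
  rintro ⟨y, hy⟩
  obtain ⟨ι, F, hF, r, hr⟩ := hx
  apply hnu
  refine ⟨y, fun z => ?_⟩
  -- key: y * (x * r j) = (y * x) * r j = x * r j
  have key : ∀ j, y * (x * r j) = x * r j := fun j => by rw [← mul_assoc, ← hy]
  constructor
  · -- y * z = z
    have h1 : Filter.Tendsto (fun j => y * ((x * r j) * z)) F (nhds (y * z)) :=
      ((hr z).1).const_mul y
    have h2 : Filter.Tendsto (fun j => y * ((x * r j) * z)) F (nhds z) := by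
      have : (fun j => y * ((x * r j) * z)) = fun j => (x * r j) * z := by
        funext j; rw [← mul_assoc, key]
      rw [this]; exact (hr z).1
    exact tendsto_nhds_unique h1 h2
  · -- z * y = z
    have h1 : Filter.Tendsto (fun j => z * (y * (x * r j))) F (nhds (z * y)) := by
      have := ((hr y).2).const_mul z
      simpa [mul_assoc] using this
    have h2 : Filter.Tendsto (fun j => z * (y * (x * r j))) F (nhds z) := by
      have : (fun j => z * (y * (x * r j))) = fun j => z * (x * r j) := by
        funext j; rw [key]
      rw [this]; exact (hr z).2
    exact tendsto_nhds_unique h1 h2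
end

section
/- Let A be a non-unital normed algebra with an approximate identity. Then the set of approximately right invertible elements of A equals the complement in A of the union of all closed proper right ideals of A. -/
theorem approxRightInv_eq_compl_union_closed_proper_right_ideals
    {A : Type*} [NonUnitalNormedRing A]
    (hnu : ¬ ∃ e : A, ∀ y : A, e * y = y ∧ y * e = y)
    (hA : ∃ (ι : Type) (F : Filter ι), F.NeBot ∧ ∃ e : ι → A, ApproxId F e) :
    {x : A | ApproxRightInv x} =
      Set.univ \ ⋃ I ∈ {I : AddSubgroup A |
        (∀ a ∈ I, ∀ b : A, a * b ∈ I) ∧ IsClosed (I : Set A) ∧ (I : Set A) ≠ Set.univ},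
        (I : Set A) := by
  ext x
  simp only [Set.mem_setOf_eq, Set.mem_diff, Set.mem_univ, true_and, Set.mem_iUnion,
    not_exists, SetLike.mem_coe]
  constructor
  · rintro ⟨ι, F, hF, r, hr⟩ I ⟨hIdeal, hClosed, hProper⟩ hxI
    apply hProper
    ext y
    simp only [Set.mem_univ, iff_true, SetLike.mem_coe]
    have htend : Filter.Tendsto (fun j => (x * r j) * y) F (nhds y) := (hr y).1
    exact hClosed.mem_of_tendsto htend
      (Filter.Eventually.of_forall fun j => hIdeal (x * r j) (hIdeal x hxI (r j)) y)
  · intro h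
    obtain ⟨ι, F, hF, e, he⟩ := hA
    -- The right ideal generated by x (as a set): x * A
    set S : Set A := Set.range (fun a => x * a) with hS
    have hSadd : ∀ a ∈ S, ∀ b ∈ S, a + b ∈ S := by
      rintro _ ⟨a, rfl⟩ _ ⟨b, rfl⟩; exact ⟨a + b, by simp [mul_add]⟩
    let B : AddSubgroup A :=
      { carrier := S
        add_mem' := fun {a b} ha hb => hSadd a ha b hb
        zero_mem' := ⟨0, mul_zero x⟩
        neg_mem' := fun {a} ⟨c, hc⟩ => ⟨-c, by simp only [mul_neg]; simp only at hc; rw [hc]⟩ }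
    let J : AddSubgroup A := B.topologicalClosure
    have hJ : (J : Set A) = closure S := rfl
    have hJideal : ∀ a ∈ J, ∀ b : A, a * b ∈ J := by
      intro a ha b
      have : a * b ∈ closure S := by
        refine map_mem_closure (f := fun c => c * b) (continuous_mul_right b) ha ?_
        rintro _ ⟨c, rfl⟩
        exact ⟨c * b, by simp [mul_assoc]⟩
      exact this
    have hJclosed : IsClosed (J : Set A) := AddSubgroup.isClosed_topologicalClosure B
    have hxJ : x ∈ J := by
      have : Filter.Tendsto (fun j => x * e j) F (nhds x) := (he x).2
      exact hJclosed.mem_of_tendsto this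
        (Filter.Eventually.of_forall fun j => B.le_topologicalClosure ⟨e j, rfl⟩)
    -- J cannot be proper
    have hJuniv : (J : Set A) = Set.univ := by
      by_contra hprop
      exact h J ⟨hJideal, hJclosed, hprop⟩ hxJ
    have hdense : ∀ z : A, z ∈ closure S := fun z => by
      rw [← hJ, hJuniv]; trivial
    -- choose approximants
    have hchoice : ∀ (j : ι) (n : ℕ), ∃ a : A, dist (e j) (x * a) < 1 / (n + 1) := by
      intro j n
      have := hdense (e j)
      rw [Metric.mem_closure_iff] at this
      obtain ⟨y, ⟨a, rfl⟩, hy⟩ := this (1 / (n + 1)) (by positivity)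
      exact ⟨a, hy⟩
    choose r hrr using hchoice
    refine ⟨ι × ℕ, F ×ˢ Filter.atTop, hF.prod Filter.atTop_neBot, fun p => r p.1 p.2, ?_⟩
    have hkey : Filter.Tendsto (fun p : ι × ℕ => x * r p.1 p.2 - e p.1)
        (F ×ˢ Filter.atTop) (nhds 0) := by
      refine squeeze_zero_norm
        (a := fun p : ι × ℕ => 1 / ((p.2 : ℝ) + 1)) (fun p : ι × ℕ => ?_) ?_
      · have := hrr p.1 p.2
        rw [dist_comm, dist_eq_norm] at this
        exact this.le
      · have h1 : Filter.Tendsto (fun n : ℕ => 1 / (n + 1 : ℝ)) Filter.atTop (nhds 0) :=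
          tendsto_one_div_add_atTop_nhds_zero_nat
        exact h1.comp (Filter.tendsto_snd)
    have hfst : Filter.Tendsto (fun p : ι × ℕ => p.1) (F ×ˢ Filter.atTop) F :=
      Filter.tendsto_fst
    intro y
    constructor
    · have h1 : Filter.Tendsto (fun p : ι × ℕ => (x * r p.1 p.2 - e p.1) * y)
          (F ×ˢ Filter.atTop) (nhds 0) := by
        simpa using hkey.mul tendsto_const_nhds
      have h2 : Filter.Tendsto (fun p : ι × ℕ => e p.1 * y) (F ×ˢ Filter.atTop) (nhds y) :=
        (he y).1.comp hfst
      have := h1.add h2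
      rw [zero_add] at this
      convert this using 2 with p
      rw [sub_mul, sub_add_cancel]
    · have h1 : Filter.Tendsto (fun p : ι × ℕ => y * (x * r p.1 p.2 - e p.1))
          (F ×ˢ Filter.atTop) (nhds 0) := by
        simpa using (tendsto_const_nhds (x := y)).mul hkey
      have h2 : Filter.Tendsto (fun p : ι × ℕ => y * e p.1) (F ×ˢ Filter.atTop) (nhds y) :=
        (he y).2.comp hfst
      have := h1.add h2
      rw [zero_add] at this
      convert this using 2 with p
      rw [mul_sub, sub_add_cancel]
end

section
/- Let A be a non-unital Banach algebra. Then every approximately right invertible element of A is a left topological divisor of zero; equivalently, inf{‖x y‖ : y ∈ A, ‖y‖ = 1} = 0 for every approximately right invertible x. -/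
theorem approxRightInv_is_left_topological_divisor_of_zero
    {A : Type*} [NonUnitalNormedRing A] [CompleteSpace A]
    [NormedSpace ℂ A] [IsScalarTower ℂ A A] [SMulCommClass ℂ A A]
    (hnu : ¬ ∃ e : A, ∀ y : A, e * y = y ∧ y * e = y)
    (x : A) (hx : ApproxRightInv x) :
    sInf ((fun y : A => ‖x * y‖) '' {y : A | ‖y‖ = 1}) = 0 := by
  by_contra h
  set S : Set ℝ := (fun y : A => ‖x * y‖) '' {y : A | ‖y‖ = 1} with hS
  set c : ℝ := sInf S with hc
  have hbdd : BddBelow S := ⟨0, by rintro _ ⟨y, -, rfl⟩; exact norm_nonneg _⟩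
  have hc0 : 0 ≤ c := Real.sInf_nonneg (by rintro _ ⟨y, -, rfl⟩; exact norm_nonneg _)
  have hcpos : 0 < c := lt_of_le_of_ne hc0 (Ne.symm h)
  -- key lower bound
  have key : ∀ z : A, c * ‖z‖ ≤ ‖x * z‖ := by
    intro z
    rcases eq_or_ne z 0 with rfl | hz
    · simp
    · have hzn : (0:ℝ) < ‖z‖ := norm_pos_iff.mpr hz
      have hn : ‖((‖z‖⁻¹ : ℝ) : ℂ) • z‖ = 1 := by
        rw [norm_smul]
        simp [abs_of_pos (inv_pos.mpr hzn), inv_mul_cancel₀ hzn.ne']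
      have hmem : ‖x * (((‖z‖⁻¹ : ℝ) : ℂ) • z)‖ ∈ S := ⟨_, hn, rfl⟩
      have h1 : c ≤ ‖x * (((‖z‖⁻¹ : ℝ) : ℂ) • z)‖ := csInf_le hbdd hmem
      rw [mul_smul_comm, norm_smul] at h1
      have : c ≤ ‖z‖⁻¹ * ‖x * z‖ := by
        simpa [abs_of_pos (inv_pos.mpr hzn)] using h1
      calc c * ‖z‖ ≤ (‖z‖⁻¹ * ‖x * z‖) * ‖z‖ := by
            exact mul_le_mul_of_nonneg_right this hzn.le
        _ = ‖x * z‖ := by field_simp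
  have hinj : ∀ z : A, x * z = 0 → z = 0 := by
    intro z hz
    have h1 := key z
    rw [hz, norm_zero] at h1
    have h2 : ‖z‖ ≤ 0 := by nlinarith
    exact norm_le_zero_iff.mp h2
  obtain ⟨ι, F, hF, r, hr⟩ := hx
  -- the net g j = r j * x is Cauchy
  set g : ι → A := fun j => r j * x with hg
  have hxg : ∀ j, x * g j = x * r j * x := fun j => (mul_assoc _ _ _).symm
  have h1 : Filter.Tendsto (fun j => x * r j * x) F (nhds x) := (hr x).1
  have hcau1 : Cauchy (Filter.map (fun j => x * r j * x) F) := h1.cauchy_map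
  have hcau : Cauchy (Filter.map g F) := by
    rw [Metric.cauchy_iff] at hcau1 ⊢
    refine ⟨Filter.map_neBot, ?_⟩
    intro ε hε
    obtain ⟨t, ht, htd⟩ := hcau1.2 (c * ε) (mul_pos hcpos hε)
    refine ⟨g '' ((fun j => x * r j * x) ⁻¹' t), Filter.image_mem_map ht, ?_⟩
    rintro _ ⟨i, hi, rfl⟩ _ ⟨k, hk, rfl⟩
    have hd : dist (x * r i * x) (x * r k * x) < c * ε := htd _ hi _ hk
    have hkey : c * ‖g i - g k‖ ≤ ‖x * g i - x * g k‖ := by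
      have := key (g i - g k)
      rwa [mul_sub] at this
    rw [dist_eq_norm]
    rw [dist_eq_norm, ← hxg, ← hxg] at hd
    nlinarith [hkey, norm_nonneg (g i - g k)]
  obtain ⟨u, hu⟩ := CompleteSpace.complete hcau
  have hgu : Filter.Tendsto g F (nhds u) := hu
  -- x * u = x
  have hxu : x * u = x := by
    have h2 : Filter.Tendsto (fun j => x * g j) F (nhds (x * u)) :=
      (continuous_mul_left x).continuousAt.tendsto.comp hgu
    have h3 : Filter.Tendsto (fun j => x * g j) F (nhds x) := by
      simpa [hxg] using h1
    exact tendsto_nhds_unique h2 h3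
  -- u is a left identity
  have hleft : ∀ y : A, u * y = y := by
    intro y
    have : x * (u * y - y) = 0 := by
      rw [mul_sub, ← mul_assoc, hxu, sub_self]
    have := hinj _ this
    rwa [sub_eq_zero] at this
  -- x * r j → u in norm
  have hconv : Filter.Tendsto (fun j => x * r j) F (nhds u) := by
    have h4 : Filter.Tendsto (fun j => u * (x * r j)) F (nhds u) := (hr u).2
    simpa [hleft] using h4
  -- u is a right identity
  have hright : ∀ y : A, y * u = y := by
    intro y
    have h5 : Filter.Tendsto (fun j => y * (x * r j)) F (nhds (y * u)) :=
      (continuous_mul_left y).continuousAt.tendsto.comp hconv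
    exact tendsto_nhds_unique h5 (hr y).2
  exact hnu ⟨u, fun y => ⟨hleft y, hright y⟩⟩
end

section
/- Let X be a nonempty locally compact Hausdorff space and f ∈ C₀(X). Then the following are equivalent: (i) f is approximately invertible in C₀(X); (ii) f·C₀(X) is dense in C₀(X); (iii) f(t) ≠ 0 for every t ∈ X. -/
open Filter Topology ZeroAtInftyContinuousMap

section Aux

variable {X : Type*} [TopologicalSpace X] [LocallyCompactSpace X] [T2Space X] [Nonempty X]

private lemma norm_le_of_forall (u : ZeroAtInftyContinuousMap X ℂ) {C : ℝ} (hC : 0 ≤ C)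
    (h : ∀ x, ‖u x‖ ≤ C) : ‖u‖ ≤ C := by
  rw [← norm_toBCF_eq_norm]
  exact (BoundedContinuousFunction.norm_le hC).mpr h

private lemma nonvanish_to_approx (f : ZeroAtInftyContinuousMap X ℂ) (hf : ∀ t : X, f t ≠ 0) :
    ∃ (ι : Type) (F : Filter ι), F.NeBot ∧
      ∃ g : ι → ZeroAtInftyContinuousMap X ℂ, ApproxId F (fun j => f * g j) := by
  -- denominators
  set ε : ℕ → ℝ := fun n => ((n : ℝ) + 1)⁻¹ with hε
  have hεpos : ∀ n, 0 < ε n := fun n => by positivity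
  have hεto : Tendsto ε atTop (𝓝 0) := tendsto_one_div_add_atTop_nhds_zero_nat.congr (by
    intro n; simp [hε, one_div])
  set d : ℕ → X → ℝ := fun n x => ‖f x‖ ^ 2 + ε n with hd
  have hdpos : ∀ n x, 0 < d n x := fun n x => by positivity
  have hdge : ∀ n x, ε n ≤ d n x := fun n x =>
    le_add_of_nonneg_left (by positivity)
  -- the approximate inverse
  have gcont : ∀ n, Continuous fun x => (starRingEnd ℂ) (f x) / ((d n x : ℝ) : ℂ) := by
    intro n
    apply Continuous.div
    · exact Complex.continuous_conj.comp (map_continuous f)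
    · exact Complex.continuous_ofReal.comp
        (((continuous_norm.comp (map_continuous f)).pow 2).add continuous_const)
    · intro x
      simpa using (hdpos n x).ne'
  have gzero : ∀ n, Tendsto (fun x => (starRingEnd ℂ) (f x) / ((d n x : ℝ) : ℂ))
      (cocompact X) (𝓝 0) := by
    intro n
    refine squeeze_zero_norm (a := fun x => (ε n)⁻¹ * ‖f x‖) (fun x => ?_) ?_
    · 
      rw [norm_div, RCLike.norm_conj, Complex.norm_real, Real.norm_of_nonneg (hdpos n x).le]
      rw [div_le_iff₀ (hdpos n x)]
      calc ‖f x‖ = (ε n)⁻¹ * ‖f x‖ * ε n := by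
            field_simp [(hεpos n).ne']
        _ ≤ (ε n)⁻¹ * ‖f x‖ * d n x := by
            apply mul_le_mul_of_nonneg_left (hdge n x); positivity
    · have := (tendsto_zero_iff_norm_tendsto_zero.mp (zero_at_infty f)).const_mul (ε n)⁻¹
      simpa using this
  set g : ℕ → ZeroAtInftyContinuousMap X ℂ := fun n =>
    ⟨⟨fun x => (starRingEnd ℂ) (f x) / ((d n x : ℝ) : ℂ), gcont n⟩, gzero n⟩ with hg
  refine ⟨ℕ, atTop, atTop_neBot, g, ?_⟩
  -- key pointwise formula
  have key : ∀ n (h : ZeroAtInftyContinuousMap X ℂ) x,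
      ‖(f * g n * h - h) x‖ = ‖h x‖ * (ε n / d n x) := by
    intro n h x
    have hne : ((d n x : ℝ) : ℂ) ≠ 0 := by simpa using (hdpos n x).ne'
    have : (f * g n * h - h) x = h x * ((-(ε n) : ℝ) / (d n x : ℝ) : ℂ) := by
      simp only [ZeroAtInftyContinuousMap.sub_apply, ZeroAtInftyContinuousMap.mul_apply]
      show f x * ((starRingEnd ℂ) (f x) / ((d n x : ℝ) : ℂ)) * h x - h x = _
      rw [mul_div_assoc', Complex.mul_conj]
      have hfd : (Complex.normSq (f x) : ℝ) = d n x - ε n := by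
        rw [Complex.normSq_eq_norm_sq]
        simp [hd]
      rw [hfd]
      push_cast
      field_simp
      ring
    rw [this, norm_mul]
    congr 1
    rw [← Complex.ofReal_div, Complex.norm_real, Real.norm_eq_abs, abs_div, abs_neg,
      abs_of_pos (hεpos n), abs_of_pos (hdpos n x)]
  have main : ∀ h : ZeroAtInftyContinuousMap X ℂ,
      Tendsto (fun n => f * g n * h) atTop (𝓝 h) := by
    intro h
    rw [tendsto_iff_norm_sub_tendsto_zero]
    rw [NormedAddCommGroup.tendsto_nhds_zero]
    intro δ hδ
    -- compact set where h is big
    have hmem : {x : X | ‖h x‖ < δ / 2} ∈ cocompact X := by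
      have := tendsto_zero_iff_norm_tendsto_zero.mp (zero_at_infty h)
      exact this (Iio_mem_nhds (by positivity))
    obtain ⟨K₀, hK₀c, hK₀⟩ := mem_cocompact.mp hmem
    obtain ⟨x₀⟩ := ‹Nonempty X›
    set K : Set X := K₀ ∪ {x₀} with hK
    have hKc : IsCompact K := hK₀c.union isCompact_singleton
    have hKne : K.Nonempty := ⟨x₀, Or.inr rfl⟩
    obtain ⟨z, hzK, hzmin⟩ := hKc.exists_isMinOn hKne
      ((continuous_norm.comp (map_continuous f)).continuousOn)
    have hm : 0 < ‖f z‖ := norm_pos_iff.mpr (hf z)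
    -- eventually the bound on K is small
    have hsmall : ∀ᶠ n in atTop, ‖h‖ * (ε n / ‖f z‖ ^ 2) < δ / 2 := by
      have : Tendsto (fun n => ‖h‖ * (ε n / ‖f z‖ ^ 2)) atTop (𝓝 0) := by
        have := (hεto.div_const (‖f z‖ ^ 2)).const_mul ‖h‖
        simpa using this
      exact this.eventually_lt_const (by positivity)
    filter_upwards [hsmall] with n hn
    rw [norm_norm]
    have hbound : ∀ x, ‖(f * g n * h - h) x‖ ≤ δ / 2 := by
      intro x
      rw [key n h x]
      by_cases hx : x ∈ K
      · calc ‖h x‖ * (ε n / d n x) ≤ ‖h‖ * (ε n / ‖f z‖ ^ 2) := by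
              apply mul_le_mul
              · rw [← norm_toBCF_eq_norm]
                exact BoundedContinuousFunction.norm_coe_le_norm h.toBCF x
              · apply div_le_div_of_nonneg_left (hεpos n).le (by positivity)
                calc ‖f z‖ ^ 2 ≤ ‖f x‖ ^ 2 := by
                      apply pow_le_pow_left₀ hm.le (hzmin hx)
                  _ ≤ d n x := by simp [hd]; exact (hεpos n).le
              · positivity
              · positivity
          _ ≤ δ / 2 := hn.le
      · have hxsmall : ‖h x‖ < δ / 2 := hK₀ (fun hmem => hx (Or.inl hmem))
        calc ‖h x‖ * (ε n / d n x) ≤ ‖h x‖ * 1 := by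
              apply mul_le_mul_of_nonneg_left _ (norm_nonneg _)
              rw [div_le_one (hdpos n x)]; exact hdge n x
          _ ≤ δ / 2 := by linarith
    calc ‖f * g n * h - h‖ ≤ δ / 2 := norm_le_of_forall _ (by positivity) hbound
      _ < δ := by linarith
  intro h
  refine ⟨main h, ?_⟩
  have : (fun n => h * (f * g n)) = fun n => f * g n * h := by
    funext n; exact mul_comm _ _
  rw [this]; exact main h

end Aux

theorem approxInv_iff_dense_iff_nonvanishing
    {X : Type*} [TopologicalSpace X] [LocallyCompactSpace X] [T2Space X] [Nonempty X]
    (f : ZeroAtInftyContinuousMap X ℂ) :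
    ((∃ (ι : Type) (F : Filter ι), F.NeBot ∧
        ∃ g : ι → ZeroAtInftyContinuousMap X ℂ, ApproxId F (fun j => f * g j)) ↔
      Dense (Set.range fun g : ZeroAtInftyContinuousMap X ℂ => f * g)) ∧
    ((∃ (ι : Type) (F : Filter ι), F.NeBot ∧
        ∃ g : ι → ZeroAtInftyContinuousMap X ℂ, ApproxId F (fun j => f * g j)) ↔
      ∀ t : X, f t ≠ 0) := by
  have h1 : (∃ (ι : Type) (F : Filter ι), F.NeBot ∧
      ∃ g : ι → ZeroAtInftyContinuousMap X ℂ, ApproxId F (fun j => f * g j)) →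
      Dense (Set.range fun g : ZeroAtInftyContinuousMap X ℂ => f * g) := by
    rintro ⟨ι, F, hF, g, hg⟩
    intro h
    refine mem_closure_of_tendsto ((hg h).1) ?_
    filter_upwards with j
    exact ⟨g j * h, by rw [mul_assoc]⟩
  have h2 : Dense (Set.range fun g : ZeroAtInftyContinuousMap X ℂ => f * g) →
      ∀ t : X, f t ≠ 0 := by
    intro hd t hft
    -- the set of functions vanishing at t is closed and contains the range
    have hclosed : IsClosed {u : ZeroAtInftyContinuousMap X ℂ | u t = 0} := by
      have hcont : Continuous fun u : ZeroAtInftyContinuousMap X ℂ => u t := by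
        have : Continuous fun u : ZeroAtInftyContinuousMap X ℂ => u.toBCF t :=
          (continuous_eval_const (F := BoundedContinuousFunction X ℂ) t).comp
            isometry_toBCF.continuous
        exact this
      exact isClosed_singleton.preimage hcont
    have hsub : Set.range (fun g : ZeroAtInftyContinuousMap X ℂ => f * g) ⊆
        {u : ZeroAtInftyContinuousMap X ℂ | u t = 0} := by
      rintro _ ⟨g, rfl⟩
      simp [ZeroAtInftyContinuousMap.mul_apply, hft]
    have : closure (Set.range fun g : ZeroAtInftyContinuousMap X ℂ => f * g) ⊆
        {u : ZeroAtInftyContinuousMap X ℂ | u t = 0} := hclosed.closure_subset_iff.mpr hsub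
    -- construct h with h t = 1
    obtain ⟨φ, hφ1, hφ0, hφc, hφb⟩ := exists_continuous_one_zero_of_isCompact
      (isCompact_singleton (x := t)) isClosed_empty (Set.disjoint_empty _)
    set ψ : ZeroAtInftyContinuousMap X ℂ :=
      ⟨⟨fun x => (φ x : ℂ), Complex.continuous_ofReal.comp φ.continuous⟩, by
        have h0 : Tendsto φ (cocompact X) (𝓝 0) := hφc.is_zero_at_infty
        have := Complex.continuous_ofReal.tendsto 0 |>.comp h0
        simpa [Function.comp_def] using this⟩
    have hψ : ψ t = 1 := by
      show ((φ t : ℂ)) = 1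
      rw [hφ1 rfl]; simp
    have : ψ t = 0 := this (hd.closure_eq ▸ Set.mem_univ ψ : ψ ∈ closure _)
    rw [hψ] at this
    exact one_ne_zero this
  have h3 : (∀ t : X, f t ≠ 0) → (∃ (ι : Type) (F : Filter ι), F.NeBot ∧
      ∃ g : ι → ZeroAtInftyContinuousMap X ℂ, ApproxId F (fun j => f * g j)) :=
    nonvanish_to_approx f
  exact ⟨⟨h1, fun hd => h3 (h2 hd)⟩, ⟨fun ha => h2 (h1 ha), h3⟩⟩
end

section
/- Let H be an infinite-dimensional separable Hilbert space and T a compact operator on H. Then: (1) T is approximately right invertible in the C*-algebra K(H) of compact operators if and only if T has dense range; (2) T is approximately left invertible in K(H) if and only if T is injective. -/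
open Filter Topology
open scoped InnerProduct

/-- An approximate identity in the algebra of compact operators on `H`:
a net of compact operators `(E j)` with `E j * S → S` and `S * E j → S`
(in operator norm) for every compact operator `S`. -/
def CompactApproxId {H : Type*} [NormedAddCommGroup H] [InnerProductSpace ℂ H]
    {ι : Type*} (F : Filter ι) (E : ι → (H →L[ℂ] H)) : Prop :=
  (∀ j, IsCompactOperator (E j)) ∧
  ∀ S : H →L[ℂ] H, IsCompactOperator S →
    Filter.Tendsto (fun j => E j * S) F (nhds S) ∧
    Filter.Tendsto (fun j => S * E j) F (nhds S)

section Helpers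

variable {H : Type*} [NormedAddCommGroup H] [InnerProductSpace ℂ H] [CompleteSpace H]

local notation "⟪" x ", " y "⟫" => @inner ℂ _ _ x y

omit [CompleteSpace H] in
lemma myOpNorm_le_of_unit (f : H →L[ℂ] H) {ε : ℝ} (hε : 0 ≤ ε)
    (h : ∀ x : H, ‖x‖ ≤ 1 → ‖f x‖ ≤ ε) : ‖f‖ ≤ ε := by
  refine f.opNorm_le_bound hε (fun x => ?_)
  rcases eq_or_ne x 0 with rfl | hx
  · simp
  · have hn : 0 < ‖x‖ := norm_pos_iff.mpr hx
    have h1 : ‖f (((‖x‖ : ℂ))⁻¹ • x)‖ ≤ ε := h _ (by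
      rw [norm_smul, norm_inv, Complex.norm_real, norm_norm, inv_mul_cancel₀ hn.ne'])
    rw [map_smul, norm_smul, norm_inv, Complex.norm_real, norm_norm] at h1
    calc ‖f x‖ = ‖x‖ * (‖x‖⁻¹ * ‖f x‖) := by field_simp
    _ ≤ ‖x‖ * ε := by nlinarith
    _ = ε * ‖x‖ := mul_comm _ _

omit [CompleteSpace H] in
lemma myCompact_of_range_le {f : H →L[ℂ] H} (V : Submodule ℂ H) [FiniteDimensional ℂ V]
    (hf : ∀ x, f x ∈ V) : IsCompactOperator f := by
  refine ⟨Subtype.val '' Metric.closedBall (0 : V) ‖f‖,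
    (isCompact_closedBall _ _).image continuous_subtype_val, ?_⟩
  refine Filter.mem_of_superset (Metric.closedBall_mem_nhds (0:H) one_pos) ?_
  intro x hx
  refine ⟨⟨f x, hf x⟩, ?_, rfl⟩
  simp only [Metric.mem_closedBall, dist_zero_right]
  calc ‖(⟨f x, hf x⟩ : V)‖ = ‖f x‖ := rfl
  _ ≤ ‖f‖ * ‖x‖ := f.le_opNorm x
  _ ≤ ‖f‖ * 1 := by
      have := Metric.mem_closedBall.mp hx
      rw [dist_zero_right] at this
      exact mul_le_mul_of_nonneg_left this (norm_nonneg _)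
  _ = ‖f‖ := mul_one _

omit [CompleteSpace H] in
lemma myRankOneCompact (u w : H) : IsCompactOperator ((innerSL ℂ u).smulRight w) := by
  haveI : FiniteDimensional ℂ (Submodule.span ℂ ({w} : Set H)) :=
    FiniteDimensional.span_of_finite ℂ (Set.finite_singleton w)
  exact myCompact_of_range_le (Submodule.span ℂ {w})
    (fun x => Submodule.mem_span_singleton.mpr ⟨⟪u, x⟫, rfl⟩)

/-- strong convergence to zero composed with a compact operator gives norm convergence -/
lemma myStrongToNorm {A : ℕ → H →L[ℂ] H} {C : ℝ} (hC : ∀ n, ‖A n‖ ≤ C)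
    (hpt : ∀ x : H, Tendsto (fun n => A n x) atTop (𝓝 0))
    {S : H →L[ℂ] H} (hS : IsCompactOperator S) :
    Tendsto (fun n => ‖A n ∘L S‖) atTop (𝓝 0) := by
  have hC0 : 0 ≤ C := le_trans (norm_nonneg _) (hC 0)
  rw [Metric.tendsto_atTop]
  intro ε hε
  have hε4 : 0 < ε / 4 := by linarith
  have hK : IsCompact (closure (S '' Metric.closedBall 0 1)) :=
    IsCompactOperator.isCompact_closure_image_closedBall (f := (S : H →ₗ[ℂ] H)) hS 1
  set K := closure (S '' Metric.closedBall 0 1) with hKdef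
  have hδ : 0 < ε / (4 * (C + 1)) := by positivity
  obtain ⟨t, htfin, hcov⟩ := (Metric.totallyBounded_iff.mp hK.totallyBounded) _ hδ
  have hev : ∀ᶠ n in atTop, ∀ y ∈ t, ‖A n y‖ < ε / 4 := by
    rw [Set.Finite.eventually_all htfin]
    intro y hy
    have hny : Tendsto (fun n => ‖A n y‖) atTop (𝓝 0) := by
      simpa using (hpt y).norm
    exact hny.eventually_lt_const hε4
  obtain ⟨N, hN⟩ := eventually_atTop.mp hev
  refine ⟨N, fun n hn' => ?_⟩
  have hn := hN n hn'
  rw [Real.dist_eq, sub_zero, abs_of_nonneg (norm_nonneg _)]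
  have hb : ‖A n ∘L S‖ ≤ ε / 2 := by
    refine myOpNorm_le_of_unit _ (by linarith) (fun x hx => ?_)
    have hSx : S x ∈ K := subset_closure ⟨x, by simpa [Metric.mem_closedBall, dist_zero_right] using hx, rfl⟩
    obtain ⟨y, hyt, hxy⟩ := Set.mem_iUnion₂.mp (hcov hSx)
    have h1 : ‖A n (S x) - A n y‖ ≤ C * ‖S x - y‖ := by
      rw [← map_sub]
      exact le_trans ((A n).le_opNorm _) (mul_le_mul_of_nonneg_right (hC n) (norm_nonneg _))
    have h2 : ‖S x - y‖ < ε / (4 * (C + 1)) := by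
      have := Metric.mem_ball.mp hxy
      rwa [dist_eq_norm] at this
    have h3 : C * ‖S x - y‖ ≤ ε / 4 := by
      have : C * ‖S x - y‖ ≤ C * (ε / (4 * (C + 1))) :=
        mul_le_mul_of_nonneg_left h2.le hC0
      calc C * ‖S x - y‖ ≤ C * (ε / (4 * (C + 1))) := this
      _ ≤ ε / 4 := by
        rw [mul_div_assoc' C ε _, div_le_div_iff₀ (by positivity) (by linarith : (0:ℝ) < 4)]
        nlinarith
    calc ‖A n (S x)‖ ≤ ‖A n (S x) - A n y‖ + ‖A n y‖ := by
          simpa using norm_add_le (A n (S x) - A n y) (A n y)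
    _ ≤ ε / 4 + ε / 4 := add_le_add (le_trans h1 h3) (hn y hyt).le
    _ = ε / 2 := by ring
  linarith

/-- approximating a finite-rank projection by `D ∘ R` when `D` has dense range -/
lemma myApproxProj (D : H →L[ℂ] H) (hD : DenseRange D) (U : Submodule ℂ H)
    [FiniteDimensional ℂ U] {ε : ℝ} (hε : 0 < ε) :
    ∃ R : H →L[ℂ] H, IsCompactOperator R ∧
      ‖D ∘L R - (U.subtypeL ∘L Submodule.orthogonalProjectionOnto U)‖ ≤ ε := by
  set m := Module.finrank ℂ U with hm
  set b := stdOrthonormalBasis ℂ U with hb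
  have hδ : 0 < ε / (m + 1) := by positivity
  have hchoice : ∀ i : Fin m, ∃ x : H, ‖D x - (b i : H)‖ < ε / (m + 1) := by
    intro i
    obtain ⟨x, hx⟩ := hD.exists_dist_lt (b i : H) hδ
    exact ⟨x, by rwa [dist_comm, dist_eq_norm] at hx⟩
  choose x hx using hchoice
  set R : H →L[ℂ] H := ∑ i, (innerSL ℂ (b i : H)).smulRight (x i) with hR
  refine ⟨R, ?_, ?_⟩
  · haveI : FiniteDimensional ℂ (Submodule.span ℂ (Set.range x)) :=
      FiniteDimensional.span_of_finite ℂ (Set.finite_range x)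
    refine myCompact_of_range_le (Submodule.span ℂ (Set.range x)) (fun v => ?_)
    have : R v = ∑ i, ⟪(b i : H), v⟫ • (x i) := by
      simp [hR, ContinuousLinearMap.sum_apply]
    rw [this]
    exact Submodule.sum_mem _ (fun i _ =>
      Submodule.smul_mem _ _ (Submodule.subset_span ⟨i, rfl⟩))
  · refine myOpNorm_le_of_unit _ hε.le (fun v hv => ?_)
    have hPv : (U.subtypeL ∘L Submodule.orthogonalProjectionOnto U) v
        = ∑ i, ⟪(b i : H), v⟫ • (b i : H) := by
      have := b.orthogonalProjectionOnto_apply_eq_sum (𝕜 := ℂ) v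
      calc (U.subtypeL ∘L Submodule.orthogonalProjectionOnto U) v
          = ((Submodule.orthogonalProjectionOnto U v : U) : H) := rfl
      _ = ((∑ i, ⟪(b i : H), v⟫ • b i : U) : H) := by rw [this]
      _ = ∑ i, ⟪(b i : H), v⟫ • (b i : H) := by
        push_cast; rfl
    have hRv : (D ∘L R) v = ∑ i, ⟪(b i : H), v⟫ • D (x i) := by
      simp [hR, ContinuousLinearMap.sum_apply, map_sum]
    have key : (D ∘L R - U.subtypeL ∘L Submodule.orthogonalProjectionOnto U) v
        = ∑ i, ⟪(b i : H), v⟫ • (D (x i) - (b i : H)) := by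
      rw [ContinuousLinearMap.sub_apply, hRv, hPv, ← Finset.sum_sub_distrib]
      congr 1; ext i; rw [smul_sub]
    rw [key]
    have hbound : ∀ i : Fin m, ‖⟪(b i : H), v⟫ • (D (x i) - (b i : H))‖ ≤ ε / (m + 1) := by
      intro i
      rw [norm_smul]
      have h1 : ‖⟪(b i : H), v⟫‖ ≤ 1 := by
        calc ‖⟪(b i : H), v⟫‖ ≤ ‖(b i : H)‖ * ‖v‖ := norm_inner_le_norm _ _
        _ = ‖v‖ := by
            have : ‖(b i : H)‖ = 1 := by
              have := b.orthonormal.1 i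
              exact this
            rw [this, one_mul]
        _ ≤ 1 := hv
      calc ‖⟪(b i : H), v⟫‖ * ‖D (x i) - (b i : H)‖ ≤ 1 * (ε / (m+1)) :=
        mul_le_mul h1 (hx i).le (norm_nonneg _) zero_le_one
      _ = ε / (m+1) := one_mul _
    calc ‖∑ i, ⟪(b i : H), v⟫ • (D (x i) - (b i : H))‖
        ≤ ∑ i : Fin m, (ε / (m+1)) := norm_sum_le_of_le _ (fun i _ => hbound i)
    _ = m * (ε / (m+1)) := by simp [Finset.sum_const, Finset.card_univ]
    _ ≤ ε := by
        rw [mul_div_assoc']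
        rw [div_le_iff₀ (by positivity)]
        nlinarith [hε.le]

/-- a sequence of finite-rank orthogonal projections converging strongly to the identity -/
lemma myProjSeq [TopologicalSpace.SeparableSpace H] :
    ∃ (U : ℕ → Submodule ℂ H) (P : ℕ → H →L[ℂ] H),
      (∀ n, FiniteDimensional ℂ (U n)) ∧
      (∀ n, IsSelfAdjoint (P n)) ∧ (∀ n, ‖P n‖ ≤ 1) ∧
      (∀ n, IsCompactOperator (P n)) ∧
      (∀ n, (∀ (_h : FiniteDimensional ℂ (U n)),
        P n = (U n).subtypeL ∘L Submodule.orthogonalProjectionOnto (U n))) ∧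
      (∀ x : H, Tendsto (fun n => P n x) atTop (𝓝 x)) := by
  obtain ⟨f, hf⟩ := TopologicalSpace.exists_dense_seq H
  set U : ℕ → Submodule ℂ H := fun n => Submodule.span ℂ (f '' {j | j < n}) with hU
  haveI hfin : ∀ n, FiniteDimensional ℂ (U n) := fun n =>
    FiniteDimensional.span_of_finite ℂ ((Set.finite_Iio n).image f)
  set P : ℕ → H →L[ℂ] H := fun n => (U n).subtypeL ∘L Submodule.orthogonalProjectionOnto (U n) with hP
  have hPnorm : ∀ n, ‖P n‖ ≤ 1 := by
    intro n
    refine myOpNorm_le_of_unit _ zero_le_one (fun v hv => ?_)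
    calc ‖P n v‖ = ‖(Submodule.orthogonalProjectionOnto (U n) v : U n)‖ := rfl
    _ ≤ ‖Submodule.orthogonalProjectionOnto (U n)‖ * ‖v‖ := ContinuousLinearMap.le_opNorm _ _
    _ ≤ 1 * 1 := mul_le_mul (Submodule.orthogonalProjectionOnto_norm_le _) hv (norm_nonneg _) zero_le_one
    _ = 1 := one_mul _
  refine ⟨U, P, hfin, fun n => isSelfAdjoint_starProjection (U n),
    hPnorm, fun n => myCompact_of_range_le (U n) (fun x => (Submodule.orthogonalProjectionOnto (U n) x).2),
    fun n _ => rfl, ?_⟩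
  intro v
  rw [Metric.tendsto_atTop]
  intro ε hε
  obtain ⟨k, hk⟩ := hf.exists_dist_lt v hε
  refine ⟨k + 1, fun n hn => ?_⟩
  have hmem : f k ∈ U n := Submodule.subset_span
    (Set.mem_image_of_mem f (show k ∈ {j | j < n} by simp only [Set.mem_setOf_eq]; omega))
  have hmin : ‖v - P n v‖ = ⨅ w : U n, ‖v - w‖ := Submodule.starProjection_minimal v
  have hbdd : BddBelow (Set.range fun w : U n => ‖v - w‖) :=
    ⟨0, by rintro _ ⟨w, rfl⟩; exact norm_nonneg _⟩
  have hle : ‖v - P n v‖ ≤ ‖v - f k‖ := by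
    rw [hmin]
    exact ciInf_le hbdd (⟨f k, hmem⟩ : U n)
  calc dist (P n v) v = ‖v - P n v‖ := by rw [dist_eq_norm, norm_sub_rev]
  _ ≤ ‖v - f k‖ := hle
  _ = dist v (f k) := (dist_eq_norm v (f k)).symm
  _ < ε := hk

lemma myTendstoApply {ι : Type} {F : Filter ι} {A : ι → H →L[ℂ] H} {B : H →L[ℂ] H}
    (h : Tendsto A F (𝓝 B)) (u : H) : Tendsto (fun j => A j u) F (𝓝 (B u)) :=
  ((ContinuousLinearMap.apply ℂ H u).continuous.tendsto B).comp h

lemma myDenseRangeAdjoint {T : H →L[ℂ] H} (hT : Function.Injective T) :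
    DenseRange (ContinuousLinearMap.adjoint T) := by
  set A := ContinuousLinearMap.adjoint T with hA
  set K : Submodule ℂ H := LinearMap.range (A : H →ₗ[ℂ] H) with hK
  have : Dense (K : Set H) := by
    rw [Submodule.dense_iff_topologicalClosure_eq_top,
      Submodule.topologicalClosure_eq_top_iff]
    rw [Submodule.eq_bot_iff]
    intro x hx
    have hTx : T x = 0 := by
      have h1 := (Submodule.mem_orthogonal K x).mp hx (A (T x)) ⟨T x, rfl⟩
      rw [hA, ContinuousLinearMap.adjoint_inner_left] at h1
      exact inner_self_eq_zero.mp h1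
    have : T x = T 0 := by rw [hTx, map_zero]
    exact hT this
  exact this

/-- the adjoint of a compact operator on a separable Hilbert space is compact -/
lemma myAdjCompact [TopologicalSpace.SeparableSpace H] {S : H →L[ℂ] H}
    (hS : IsCompactOperator S) : IsCompactOperator (star S : H →L[ℂ] H) := by
  obtain ⟨U, P, hfin, hsa, hnorm, hcpt, hPdef, hstrong⟩ := myProjSeq (H := H)
  have hP1 : ∀ x : H, Tendsto (fun n => (P n - 1) x) atTop (𝓝 0) := by
    intro x
    have := (hstrong x).sub_const x
    simpa using this
  have hPC : ∀ n, ‖P n - 1‖ ≤ 2 := by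
    intro n
    calc ‖P n - 1‖ ≤ ‖P n‖ + ‖(1 : H →L[ℂ] H)‖ := norm_sub_le _ _
    _ ≤ 1 + 1 := add_le_add (hnorm n) ContinuousLinearMap.norm_id_le
    _ = 2 := by norm_num
  have hPS : Tendsto (fun n => ‖P n ∘L S - S‖) atTop (𝓝 0) := by
    have hcomp : ∀ n, (P n - 1) ∘L S = P n ∘L S - S := fun n => by
      ext x; simp [ContinuousLinearMap.sub_apply]
    simpa only [hcomp] using myStrongToNorm hPC hP1 hS
  rw [ContinuousLinearMap.star_eq_adjoint]
  have hTend : Tendsto (fun n => ContinuousLinearMap.adjoint S ∘L P n) atTop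
      (𝓝 (ContinuousLinearMap.adjoint S)) := by
    rw [tendsto_iff_norm_sub_tendsto_zero]
    have heq : ∀ n, ‖ContinuousLinearMap.adjoint S ∘L P n - ContinuousLinearMap.adjoint S‖
        = ‖P n ∘L S - S‖ := by
      intro n
      have h1 : ContinuousLinearMap.adjoint (P n ∘L S - S)
          = ContinuousLinearMap.adjoint S ∘L P n - ContinuousLinearMap.adjoint S := by
        rw [map_sub, ContinuousLinearMap.adjoint_comp, (hsa n).adjoint_eq]
      rw [← h1, LinearIsometryEquiv.norm_map]
    simp only [heq]
    exact hPS
  refine isCompactOperator_of_tendsto hTend (Eventually.of_forall (fun n => ?_))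
  exact (hcpt n).continuous_comp (ContinuousLinearMap.adjoint S).continuous

/-- main construction: dense range gives approximate right inverse -/
lemma myConstruction [TopologicalSpace.SeparableSpace H]
    (D : H →L[ℂ] H) (hD : DenseRange D) :
    ∃ R : ℕ → H →L[ℂ] H, (∀ n, IsCompactOperator (R n)) ∧
      CompactApproxId atTop (fun n => D * R n) := by
  obtain ⟨U, P, hfin, hsa, hnorm, hcpt, hPdef, hstrong⟩ := myProjSeq (H := H)
  haveI := hfin
  have hch : ∀ n : ℕ, ∃ R : H →L[ℂ] H, IsCompactOperator R ∧
      ‖D ∘L R - P n‖ ≤ 1 / (n + 1) := by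
    intro n
    obtain ⟨R, hR1, hR2⟩ := myApproxProj D hD (U n) (ε := 1 / (n+1)) (by positivity)
    exact ⟨R, hR1, by rwa [hPdef n (hfin n)]⟩
  choose R hRc hRP using hch
  have hDRP : Tendsto (fun n => ‖D ∘L R n - P n‖) atTop (𝓝 0) := by
    refine squeeze_zero (fun n => norm_nonneg _) hRP ?_
    exact tendsto_one_div_add_atTop_nhds_zero_nat
  have hP1 : ∀ x : H, Tendsto (fun n => (P n - 1) x) atTop (𝓝 0) := by
    intro x
    have := (hstrong x).sub_const x
    simpa using this
  have hPC : ∀ n, ‖P n - 1‖ ≤ 2 := by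
    intro n
    calc ‖P n - 1‖ ≤ ‖P n‖ + ‖(1 : H →L[ℂ] H)‖ := norm_sub_le _ _
    _ ≤ 1 + 1 := add_le_add (hnorm n) ContinuousLinearMap.norm_id_le
    _ = 2 := by norm_num
  have hPS : ∀ S : H →L[ℂ] H, IsCompactOperator S →
      Tendsto (fun n => ‖P n ∘L S - S‖) atTop (𝓝 0) := by
    intro S hS
    have hcomp : ∀ n, (P n - 1) ∘L S = P n ∘L S - S := fun n => by
      ext x; simp [ContinuousLinearMap.sub_apply]
    simpa only [hcomp] using myStrongToNorm hPC hP1 hS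
  have hSP : ∀ S : H →L[ℂ] H, IsCompactOperator S →
      Tendsto (fun n => ‖S ∘L P n - S‖) atTop (𝓝 0) := by
    intro S hS
    have hS' : IsCompactOperator (ContinuousLinearMap.adjoint S) := by
      have := myAdjCompact hS
      rwa [ContinuousLinearMap.star_eq_adjoint] at this
    have h1 := hPS _ hS'
    have heq : ∀ n, ‖S ∘L P n - S‖
        = ‖P n ∘L ContinuousLinearMap.adjoint S - ContinuousLinearMap.adjoint S‖ := by
      intro n
      have h2 : ContinuousLinearMap.adjoint (P n ∘L ContinuousLinearMap.adjoint S
          - ContinuousLinearMap.adjoint S) = S ∘L P n - S := by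
        rw [map_sub, ContinuousLinearMap.adjoint_comp, (hsa n).adjoint_eq,
          ContinuousLinearMap.adjoint_adjoint]
      rw [← h2, LinearIsometryEquiv.norm_map]
    simp only [heq]
    exact h1
  refine ⟨R, hRc, ⟨fun n => ?_, fun S hS => ⟨?_, ?_⟩⟩⟩
  · exact (hRc n).continuous_comp D.continuous
  · rw [tendsto_iff_norm_sub_tendsto_zero]
    refine squeeze_zero (fun n => norm_nonneg _)
      (g := fun n => ‖D ∘L R n - P n‖ * ‖S‖ + ‖P n ∘L S - S‖) (fun n => ?_) ?_
    · have : (D * R n) * S - S = (D ∘L R n - P n) ∘L S + (P n ∘L S - S) := by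
        ext x; simp [ContinuousLinearMap.sub_apply, ContinuousLinearMap.mul_apply]
      rw [this]
      calc ‖(D ∘L R n - P n) ∘L S + (P n ∘L S - S)‖
          ≤ ‖(D ∘L R n - P n) ∘L S‖ + ‖P n ∘L S - S‖ := norm_add_le _ _
      _ ≤ ‖D ∘L R n - P n‖ * ‖S‖ + ‖P n ∘L S - S‖ :=
        add_le_add_left (ContinuousLinearMap.opNorm_comp_le _ _) _
    · have h1 : Tendsto (fun n => ‖D ∘L R n - P n‖ * ‖S‖) atTop (𝓝 0) := by
        simpa using hDRP.mul_const ‖S‖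
      simpa using h1.add (hPS S hS)
  · rw [tendsto_iff_norm_sub_tendsto_zero]
    refine squeeze_zero (fun n => norm_nonneg _)
      (g := fun n => ‖S‖ * ‖D ∘L R n - P n‖ + ‖S ∘L P n - S‖) (fun n => ?_) ?_
    · have : S * (D * R n) - S = S ∘L (D ∘L R n - P n) + (S ∘L P n - S) := by
        ext x; simp [ContinuousLinearMap.sub_apply, ContinuousLinearMap.mul_apply]
      rw [this]
      calc ‖S ∘L (D ∘L R n - P n) + (S ∘L P n - S)‖
          ≤ ‖S ∘L (D ∘L R n - P n)‖ + ‖S ∘L P n - S‖ := norm_add_le _ _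
      _ ≤ ‖S‖ * ‖D ∘L R n - P n‖ + ‖S ∘L P n - S‖ :=
        add_le_add_left (ContinuousLinearMap.opNorm_comp_le _ _) _
    · have h1 : Tendsto (fun n => ‖S‖ * ‖D ∘L R n - P n‖) atTop (𝓝 0) := by
        simpa using hDRP.const_mul ‖S‖
      simpa using h1.add (hSP S hS)

/-- approximate identities are preserved by taking adjoints -/
lemma myApproxIdAdjoint [TopologicalSpace.SeparableSpace H] {E : ℕ → H →L[ℂ] H}
    (h : CompactApproxId atTop E) :
    CompactApproxId atTop (fun n => star (E n)) := by
  obtain ⟨hE1, hE2⟩ := h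
  refine ⟨fun n => myAdjCompact (hE1 n), fun S hS => ?_⟩
  have hS' : IsCompactOperator (star S : H →L[ℂ] H) := myAdjCompact hS
  obtain ⟨hL, hR⟩ := hE2 (star S) hS'
  constructor
  · rw [tendsto_iff_norm_sub_tendsto_zero]
    rw [tendsto_iff_norm_sub_tendsto_zero] at hR
    have heq : ∀ n, ‖star (E n) * S - S‖ = ‖star S * E n - star S‖ := by
      intro n
      have : star (star S * E n - star S) = star (E n) * S - S := by
        simp only [star_sub, star_mul, star_star]
      rw [← this, norm_star]
    simpa only [heq] using hR
  · rw [tendsto_iff_norm_sub_tendsto_zero]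
    rw [tendsto_iff_norm_sub_tendsto_zero] at hL
    have heq : ∀ n, ‖S * star (E n) - S‖ = ‖E n * star S - star S‖ := by
      intro n
      have : star (E n * star S - star S) = S * star (E n) - S := by
        simp only [star_sub, star_mul, star_star]
      rw [← this, norm_star]
    simpa only [heq] using hL

end Helpers


theorem compactOperator_approxInv_characterization
    {H : Type*} [NormedAddCommGroup H] [InnerProductSpace ℂ H] [CompleteSpace H]
    [TopologicalSpace.SeparableSpace H]
    (hinf : ¬ FiniteDimensional ℂ H)
    (T : H →L[ℂ] H) (hT : IsCompactOperator T) :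
    ((∃ (ι : Type) (F : Filter ι), F.NeBot ∧ ∃ R : ι → (H →L[ℂ] H),
        (∀ j, IsCompactOperator (R j)) ∧ CompactApproxId F (fun j => T * R j)) ↔
      DenseRange T) ∧
    ((∃ (ι : Type) (F : Filter ι), F.NeBot ∧ ∃ L : ι → (H →L[ℂ] H),
        (∀ j, IsCompactOperator (L j)) ∧ CompactApproxId F (fun j => L j * T)) ↔
      Function.Injective T) := by
  haveI : Nontrivial H := by
    by_contra h
    rw [not_nontrivial_iff_subsingleton] at h
    exact hinf inferInstance
  obtain ⟨u, hu⟩ := exists_ne (0 : H)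
  constructor
  · constructor
    · rintro ⟨ι, F, hF, R, hR, hAI⟩
      haveI := hF
      intro v
      -- rank one operator S with S u = v
      set c : ℂ := (@inner ℂ _ _ u u)⁻¹ with hc
      set S : H →L[ℂ] H := (innerSL ℂ u).smulRight (c • v) with hS
      have hSu : S u = v := by
        rw [hS]
        simp only [ContinuousLinearMap.smulRight_apply, innerSL_apply_apply, smul_smul]
        rw [hc, mul_inv_cancel₀ (inner_self_ne_zero.mpr hu), one_smul]
      have hScpt : IsCompactOperator S := myRankOneCompact u (c • v)
      have h1 := (hAI.2 S hScpt).1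
      have h2 := myTendstoApply h1 u
      rw [hSu] at h2
      refine mem_closure_of_tendsto h2 (Eventually.of_forall (fun j => ?_))
      exact ⟨R j (S u), rfl⟩
    · intro hDense
      obtain ⟨R, h1, h2⟩ := myConstruction T hDense
      exact ⟨ℕ, atTop, atTop_neBot, R, h1, h2⟩
  · constructor
    · rintro ⟨ι, F, hF, L, hL, hAI⟩
      haveI := hF
      have key : ∀ x : H, T x = 0 → x = 0 := by
        intro x hx
        by_contra hx0
        set S : H →L[ℂ] H := (innerSL ℂ x).smulRight u with hS
        have hScpt : IsCompactOperator S := myRankOneCompact x u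
        have h2 := (hAI.2 S hScpt).2
        have h3 := myTendstoApply h2 x
        have h4 : (fun j => (S * (L j * T)) x) = fun _ => (0 : H) := by
          funext j
          simp only [ContinuousLinearMap.mul_apply, hx, map_zero]
        rw [h4] at h3
        have h5 : S x = 0 := tendsto_nhds_unique h3 tendsto_const_nhds
        have h6 : S x = (inner ℂ x x : ℂ) • u := by
          simp [hS]
        rw [h6] at h5
        exact smul_ne_zero (inner_self_ne_zero.mpr hx0) hu h5
      intro a b hab
      have h6 : T (a - b) = 0 := by rw [map_sub, hab, sub_self]
      exact sub_eq_zero.mp (key _ h6)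
    · intro hInj
      have hD := myDenseRangeAdjoint hInj
      obtain ⟨R, hRc, hAI⟩ := myConstruction (ContinuousLinearMap.adjoint T) hD
      have hAI' := myApproxIdAdjoint hAI
      have heq : (fun n => star ((ContinuousLinearMap.adjoint T) * R n))
          = fun n => (star (R n)) * T := by
        funext n
        rw [star_mul, ← ContinuousLinearMap.star_eq_adjoint, star_star]
      rw [heq] at hAI'
      refine ⟨ℕ, atTop, atTop_neBot, fun n => star (R n), fun n => myAdjCompact (hRc n), hAI'⟩
end
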